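/- Let L ≥ 1 and let s, x, y ∈ ℂ^L with s ≠ 0, and assume x is not a scalar multiple of s. Set c = (‖x‖² − |⟪s, x⟫|²/‖s‖²) + (‖y‖² − |⟪s, y⟫|²/‖s‖²) (which is positive). Then sup over α ∈ ℂ, β ∈ ℂ and v ∈ (0, ∞) of the function (α, β, v) ↦ −2L·log v − (‖x − α • s‖² + ‖y − β • s‖²)/v equals −2L·log(c/(2L)) − 2L, attained at α = ⟪s, x⟫/‖s‖², β = ⟪s, y⟫/‖s‖², v = c/(2L). -/

import Mathlib

open scoped ComplexInnerProductSpace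

/-!
Writing `a = ⟪s, x⟫ / ‖s‖²`, the vector `x - a • s` is orthogonal to `s`, so by Pythagoras
`‖x - α • s‖² = (‖x‖² - |⟪s, x⟫|² / ‖s‖²) + ‖s‖² |α - a|²`. Hence the minimum over `α` and `β`
of `‖x - α • s‖² + ‖y - β • s‖²` is `c`, attained at the projection coefficients, and `c > 0`
because `x` is not a multiple of `s`. It remains to maximise `v ↦ -M log v - c / v` with
`M = 2L`, which by `log t ≤ t - 1` at `t = c / (M v)` is at most its value at `v = c / M`.
-/

section Projection

variable {𝕜 E : Type*} [RCLike 𝕜] [NormedAddCommGroup E] [InnerProductSpace 𝕜 E]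

local notation "⟪" x ", " y "⟫" => inner 𝕜 x y

theorem inner_sub_smul_self_eq_zero (s x : E) :
    ⟪s, x - (⟪s, x⟫ / (‖s‖ : 𝕜) ^ 2) • s⟫ = 0 := by
  rcases eq_or_ne s 0 with rfl | hs
  · simp
  have hs' : (‖s‖ : 𝕜) ^ 2 ≠ 0 := by simpa using hs
  rw [inner_sub_right, inner_smul_right, inner_self_eq_norm_sq_to_K, div_mul_cancel₀ _ hs',
    sub_self]

theorem norm_sub_smul_sq (s x : E) (α : 𝕜) :
    ‖x - α • s‖ ^ 2 =
      (‖x‖ ^ 2 - ‖⟪s, x⟫‖ ^ 2 / ‖s‖ ^ 2) + ‖s‖ ^ 2 * ‖α - ⟪s, x⟫ / (‖s‖ : 𝕜) ^ 2‖ ^ 2 := by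
  set a := ⟪s, x⟫ / (‖s‖ : 𝕜) ^ 2
  have horth (b : 𝕜) : ⟪x - a • s, b • s⟫ = 0 := by
    rw [inner_smul_right, inner_eq_zero_symm.mp (inner_sub_smul_self_eq_zero s x), mul_zero]
  have hx := norm_add_sq_eq_norm_sq_add_norm_sq_of_inner_eq_zero _ _ (horth a)
  have hα := norm_add_sq_eq_norm_sq_add_norm_sq_of_inner_eq_zero _ _ (horth (a - α))
  rw [sub_add_cancel] at hx
  rw [show x - a • s + (a - α) • s = x - α • s by module] at hα
  have ha : ‖a • s‖ ^ 2 = ‖⟪s, x⟫‖ ^ 2 / ‖s‖ ^ 2 := by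
    rcases eq_or_ne s 0 with rfl | hs
    · simp
    rw [norm_smul, norm_div, norm_pow, RCLike.norm_ofReal, abs_norm]
    field_simp
  have hb : ‖(a - α) • s‖ ^ 2 = ‖s‖ ^ 2 * ‖α - a‖ ^ 2 := by
    rw [norm_smul, norm_sub_rev]
    ring
  simp only [← sq] at hx hα
  linarith

theorem norm_sub_proj_smul_sq (s x : E) :
    ‖x - (⟪s, x⟫ / (‖s‖ : 𝕜) ^ 2) • s‖ ^ 2 = ‖x‖ ^ 2 - ‖⟪s, x⟫‖ ^ 2 / ‖s‖ ^ 2 := by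
  simp [norm_sub_smul_sq s x]

theorem sub_norm_inner_sq_div_le_norm_sub_smul_sq (s x : E) (α : 𝕜) :
    ‖x‖ ^ 2 - ‖⟪s, x⟫‖ ^ 2 / ‖s‖ ^ 2 ≤ ‖x - α • s‖ ^ 2 := by
  rw [norm_sub_smul_sq s x α]
  exact le_add_of_nonneg_right (by positivity)

theorem sub_norm_inner_sq_div_pos {s x : E} (hx : ∀ a : 𝕜, x ≠ a • s) :
    0 < ‖x‖ ^ 2 - ‖⟪s, x⟫‖ ^ 2 / ‖s‖ ^ 2 := by
  rw [← norm_sub_proj_smul_sq s x]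
  exact pow_pos (norm_pos_iff.mpr (sub_ne_zero.mpr (hx _))) 2

end Projection

theorem neg_mul_log_sub_div_le {M c v : ℝ} (hM : 0 < M) (hc : 0 < c) (hv : 0 < v) :
    -M * Real.log v - c / v ≤ -M * Real.log (c / M) - M := by
  have h := Real.log_le_sub_one_of_pos (show 0 < c / (M * v) by positivity)
  rw [Real.log_div hc.ne' (by positivity), Real.log_mul hM.ne' hv.ne'] at h
  have hcv : M * (c / (M * v)) = c / v := by field_simp
  rw [Real.log_div hc.ne' hM.ne']
  nlinarith [mul_le_mul_of_nonneg_left h hM.le]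

theorem stmt3_general (L : ℕ) (hL : 1 ≤ L) (s x y : EuclideanSpace ℂ (Fin L))
    (hxs : ∀ a : ℂ, x ≠ a • s) :
    0 < (‖x‖ ^ 2 - ‖⟪s, x⟫‖ ^ 2 / ‖s‖ ^ 2) + (‖y‖ ^ 2 - ‖⟪s, y⟫‖ ^ 2 / ‖s‖ ^ 2) ∧
    IsGreatest
      {r : ℝ | ∃ (α β : ℂ) (v : ℝ), 0 < v ∧
        r = -2 * (L : ℝ) * Real.log v - (‖x - α • s‖ ^ 2 + ‖y - β • s‖ ^ 2) / v}
      (-2 * (L : ℝ) *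
          Real.log (((‖x‖ ^ 2 - ‖⟪s, x⟫‖ ^ 2 / ‖s‖ ^ 2) +
            (‖y‖ ^ 2 - ‖⟪s, y⟫‖ ^ 2 / ‖s‖ ^ 2)) / (2 * L)) - 2 * L) ∧
    -2 * (L : ℝ) *
        Real.log (((‖x‖ ^ 2 - ‖⟪s, x⟫‖ ^ 2 / ‖s‖ ^ 2) +
          (‖y‖ ^ 2 - ‖⟪s, y⟫‖ ^ 2 / ‖s‖ ^ 2)) / (2 * L))
      - (‖x - (⟪s, x⟫ / (‖s‖ : ℂ) ^ 2) • s‖ ^ 2 +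
          ‖y - (⟪s, y⟫ / (‖s‖ : ℂ) ^ 2) • s‖ ^ 2) /
        (((‖x‖ ^ 2 - ‖⟪s, x⟫‖ ^ 2 / ‖s‖ ^ 2) +
          (‖y‖ ^ 2 - ‖⟪s, y⟫‖ ^ 2 / ‖s‖ ^ 2)) / (2 * L)) =
    -2 * (L : ℝ) *
        Real.log (((‖x‖ ^ 2 - ‖⟪s, x⟫‖ ^ 2 / ‖s‖ ^ 2) +
          (‖y‖ ^ 2 - ‖⟪s, y⟫‖ ^ 2 / ‖s‖ ^ 2)) / (2 * L)) - 2 * L := by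
  have hM : (0 : ℝ) < 2 * L := by positivity
  -- stated over `ℂ` so that `rw` matches `Complex.ofReal`, not the defeq `RCLike.ofReal`
  have hproj (z : EuclideanSpace ℂ (Fin L)) :
      ‖z - (⟪s, z⟫ / (‖s‖ : ℂ) ^ 2) • s‖ ^ 2 = ‖z‖ ^ 2 - ‖⟪s, z⟫‖ ^ 2 / ‖s‖ ^ 2 :=
    norm_sub_proj_smul_sq s z
  rw [hproj, hproj]
  set c := (‖x‖ ^ 2 - ‖⟪s, x⟫‖ ^ 2 / ‖s‖ ^ 2) + (‖y‖ ^ 2 - ‖⟪s, y⟫‖ ^ 2 / ‖s‖ ^ 2)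
  have hc : 0 < c :=
    add_pos_of_pos_of_nonneg (sub_norm_inner_sq_div_pos hxs) (by rw [← hproj y]; positivity)
  have hopt : -2 * (L : ℝ) * Real.log (c / (2 * L)) - c / (c / (2 * L)) =
      -2 * (L : ℝ) * Real.log (c / (2 * L)) - 2 * L := by
    rw [div_div_cancel₀ hc.ne']
  refine ⟨hc, ⟨⟨⟪s, x⟫ / (‖s‖ : ℂ) ^ 2, ⟪s, y⟫ / (‖s‖ : ℂ) ^ 2, c / (2 * L), by positivity, ?_⟩,
    ?_⟩, hopt⟩
  · rw [hproj, hproj, hopt]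
  rintro r ⟨α, β, v, hv, rfl⟩
  have hres : c ≤ ‖x - α • s‖ ^ 2 + ‖y - β • s‖ ^ 2 :=
    add_le_add (sub_norm_inner_sq_div_le_norm_sub_smul_sq s x α)
      (sub_norm_inner_sq_div_le_norm_sub_smul_sq s y β)
  calc -2 * (L : ℝ) * Real.log v - (‖x - α • s‖ ^ 2 + ‖y - β • s‖ ^ 2) / v
      ≤ -2 * (L : ℝ) * Real.log v - c / v := by gcongr
    _ ≤ -2 * (L : ℝ) * Real.log (c / (2 * L)) - 2 * L := by
      simpa only [neg_mul] using neg_mul_log_sub_div_le hM hc hv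

/-- Per-channel concentration of the alternative-hypothesis log-likelihood
(eqs. (45)–(48)): with `c = (‖x‖² - |⟪s, x⟫|²/‖s‖²) + (‖y‖² - |⟪s, y⟫|²/‖s‖²) > 0`
(positive since `x` is not a multiple of `s`), the supremum over `α, β ∈ ℂ` and
`v ∈ (0,∞)` of `-2L·log v - (‖x - α•s‖² + ‖y - β•s‖²)/v` equals
`-2L·log(c/(2L)) - 2L`, attained at `α = ⟪s, x⟫/‖s‖²`, `β = ⟪s, y⟫/‖s‖²`,
`v = c/(2L)`. -/
theorem stmt3 (L : ℕ) (hL : 1 ≤ L) (s x y : EuclideanSpace ℂ (Fin L))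
    (hs : s ≠ 0) (hxs : ∀ a : ℂ, x ≠ a • s) :
    0 < (‖x‖ ^ 2 - ‖⟪s, x⟫‖ ^ 2 / ‖s‖ ^ 2) + (‖y‖ ^ 2 - ‖⟪s, y⟫‖ ^ 2 / ‖s‖ ^ 2) ∧
    IsGreatest
      {r : ℝ | ∃ (α β : ℂ) (v : ℝ), 0 < v ∧
        r = -2 * (L : ℝ) * Real.log v - (‖x - α • s‖ ^ 2 + ‖y - β • s‖ ^ 2) / v}
      (-2 * (L : ℝ) *
          Real.log (((‖x‖ ^ 2 - ‖⟪s, x⟫‖ ^ 2 / ‖s‖ ^ 2) +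
            (‖y‖ ^ 2 - ‖⟪s, y⟫‖ ^ 2 / ‖s‖ ^ 2)) / (2 * L)) - 2 * L) ∧
    -2 * (L : ℝ) *
        Real.log (((‖x‖ ^ 2 - ‖⟪s, x⟫‖ ^ 2 / ‖s‖ ^ 2) +
          (‖y‖ ^ 2 - ‖⟪s, y⟫‖ ^ 2 / ‖s‖ ^ 2)) / (2 * L))
      - (‖x - (⟪s, x⟫ / (‖s‖ : ℂ) ^ 2) • s‖ ^ 2 +
          ‖y - (⟪s, y⟫ / (‖s‖ : ℂ) ^ 2) • s‖ ^ 2) /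
        (((‖x‖ ^ 2 - ‖⟪s, x⟫‖ ^ 2 / ‖s‖ ^ 2) +
          (‖y‖ ^ 2 - ‖⟪s, y⟫‖ ^ 2 / ‖s‖ ^ 2)) / (2 * L)) =
    -2 * (L : ℝ) *
        Real.log (((‖x‖ ^ 2 - ‖⟪s, x⟫‖ ^ 2 / ‖s‖ ^ 2) +
          (‖y‖ ^ 2 - ‖⟪s, y⟫‖ ^ 2 / ‖s‖ ^ 2)) / (2 * L)) - 2 * L :=
  stmt3_general L hL s x y hxs
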